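/- arXiv:1308.4884 — 2 statements merged into one kernel-verified Lean document; each statement's English description precedes it below -/
import Mathlib

section
/- With yⁿ the piecewise linear interpolation of the implicit Euler scheme for the y-equation, set x_tⁿ := F₁⁻¹(y_tⁿ) and x_t := F₁⁻¹(y_t), where y is the continuous (0, F₁(1))-valued solution of y_t = F₁(x₀) + ∫₀^t (G ∘ F₁⁻¹)(y_s) ds + γθ^β w_t (assumed α-Hölder continuous on [0,T]). Then there exists a constant C' > 0 (depending on T, α, β, θ, μ, γ, w and y but not on n) such that sup_{t∈[0,T]} |x_tⁿ - x_t| ≤ C' · n^{-α} for all n ∈ ℕ*; in particular, xⁿ converges uniformly to x with rate n^{-α}. -/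
/- Fix α ∈ (0,1], β ∈ (1-α,1), θ > 0, μ ∈ (0,1), γ ∈ ℝ, T > 0, x₀ ∈ (0,1).
F₁(y) = ∫₀^y [v(1-v)]^{-β} dv is a strictly increasing bijection from [0,1]
onto [0,F₁(1)] with inverse F₁⁻¹ (realized via `Function.invFunOn`), Lipschitz
on [0,F₁(1)]; G(y) := θ(μ-y)[y(1-y)]^{-β}. Let w : [0,T] → ℝ be α-Hölder with
w₀ = 0.
STATEMENT 18: With yⁿ the piecewise linear interpolation of the implicit Euler
scheme started at F₁(x₀), set x_tⁿ := F₁⁻¹(y_tⁿ) and x_t := F₁⁻¹(y_t), where y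
is the continuous (0,F₁(1))-valued solution of
y_t = F₁(x₀) + ∫₀^t (G∘F₁⁻¹)(y_s) ds + γθ^β w_t (assumed α-Hölder on [0,T]).
Then there is C' > 0 (independent of n) such that
sup_{t∈[0,T]} |x_tⁿ - x_t| ≤ C' n^{-α} for all n ∈ ℕ*. -/

noncomputable def F1 (β y : ℝ) : ℝ := ∫ v in (0:ℝ)..y, (v * (1 - v)) ^ (-β)

noncomputable def F1inv (β z : ℝ) : ℝ := Function.invFunOn (F1 β) (Set.Icc 0 1) z

noncomputable def G (β θ μ x : ℝ) : ℝ := θ * (μ - x) * (x * (1 - x)) ^ (-β)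

/-- Piecewise linear interpolation of (Y k) at the nodes t_k = kT/n. -/
noncomputable def interp (T : ℝ) (n : ℕ) (Y : ℕ → ℝ) (t : ℝ) : ℝ :=
  Y ⌊t * n / T⌋₊ + (Y (⌊t * n / T⌋₊ + 1) - Y ⌊t * n / T⌋₊) * (t * n / T - ⌊t * n / T⌋₊)

/-!
Under the substitution `y = F₁(x)` the noise becomes additive and the drift `f = G ∘ F₁⁻¹` is
one-sided Lipschitz with constant `K = 2θβ`, because `G' ≤ 2θβ F₁'` on `(0, 1)`. Hence every
implicit Euler step amplifies the error by at most `1 + 2K T/n` (once `K T/n ≤ 1/2`), while the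
local error of a step is `O((T/n)^(1+α))`: `f ∘ y` is α-Hölder since `f` is Lipschitz on the
compact range of `y`. A discrete Gronwall argument bounds the error at the nodes by
`O((T/n)^α)`, the Hölder continuity of `y` adds the same order between nodes, and `F₁⁻¹` is
1-Lipschitz because `F₁' ≥ 1`. The finitely many `n` with `K T/n > 1/2` only affect the constant.
-/

open Set MeasureTheory intervalIntegral

lemma abs_le_of_implicit_step {K h d E g : ℝ} (hK : 0 ≤ K) (hh : 0 ≤ h) (hhK : h * K ≤ 1 / 2)
    (hg : g * d ≤ K * d ^ 2) (hd : d = E + h * g) : |d| ≤ (1 + 2 * h * K) * |E| := by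
  have hsq : |d| * |d| ≤ |d| * |E| + h * K * (|d| * |d|) := by
    rw [abs_mul_abs_self, ← abs_mul]
    calc d * d = d * E + h * (g * d) := by rw [hd]; ring
      _ ≤ |d * E| + h * (K * d ^ 2) := add_le_add (le_abs_self _) (by gcongr)
      _ = _ := by ring
  have hcontract : (1 - h * K) * |d| ≤ |E| := by
    rcases (abs_nonneg d).eq_or_lt with h0 | hpos
    · rw [← h0, mul_zero]; exact abs_nonneg E
    · exact le_of_mul_le_mul_right (by linarith) hpos
  have hhK₀ : 0 ≤ h * K := mul_nonneg hh hK
  -- `(1 + 2hK)(1 - hK) ≥ 1` as long as `hK ≤ 1/2`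
  nlinarith [mul_le_mul_of_nonneg_left hcontract (by positivity : 0 ≤ 1 + 2 * h * K),
    mul_nonneg (mul_nonneg hhK₀ (by linarith : 0 ≤ 1 - 2 * (h * K))) (abs_nonneg d)]

lemma le_mul_pow_mul_of_le_mul_add {a B : ℝ} {n : ℕ} {e : ℕ → ℝ} (ha : 1 ≤ a) (hB : 0 ≤ B)
    (he₀ : e 0 ≤ 0) (hrec : ∀ k < n, e (k + 1) ≤ a * (e k + B)) :
    ∀ k ≤ n, e k ≤ k * a ^ k * B := by
  intro k hk
  induction k with
  | zero => simpa using he₀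
  | succ k ih =>
    have hak : a ≤ a ^ (k + 1) := le_self_pow₀ ha k.succ_ne_zero
    calc e (k + 1) ≤ a * (e k + B) := hrec k hk
      _ ≤ a * (k * a ^ k * B + B) :=
        mul_le_mul_of_nonneg_left (by linarith [ih (by omega)]) (by linarith)
      _ = k * a ^ (k + 1) * B + a * B := by ring
      _ ≤ k * a ^ (k + 1) * B + a ^ (k + 1) * B := by gcongr
      _ = _ := by push_cast; ring

lemma abs_sub_le_of_implicitEuler {n : ℕ} {f : ℝ → ℝ} {S : Set ℝ} {Y u I Δ : ℕ → ℝ} {h K ε : ℝ}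
    (hK : 0 ≤ K) (hh : 0 ≤ h) (hhK : h * K ≤ 1 / 2) (hε : 0 ≤ ε)
    (hf : ∀ z₁ ∈ S, ∀ z₂ ∈ S, (f z₁ - f z₂) * (z₁ - z₂) ≤ K * (z₁ - z₂) ^ 2)
    (hYS : ∀ k ≤ n, Y k ∈ S) (huS : ∀ k ≤ n, u k ∈ S) (h₀ : Y 0 = u 0)
    (hY : ∀ k < n, Y (k + 1) = Y k + h * f (Y (k + 1)) + Δ k)
    (hu : ∀ k < n, u (k + 1) = u k + I k + Δ k)
    (hI : ∀ k < n, |h * f (u (k + 1)) - I k| ≤ h * ε) :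
    ∀ k ≤ n, |Y k - u k| ≤ k * h * ε * Real.exp (2 * K * (k * h)) := by
  have hrec : ∀ k < n, |Y (k + 1) - u (k + 1)| ≤ (1 + 2 * h * K) * (|Y k - u k| + h * ε) :=
    fun k hk => by
      have hd : Y (k + 1) - u (k + 1) = (Y k - u k + (h * f (u (k + 1)) - I k)) +
          h * (f (Y (k + 1)) - f (u (k + 1))) := by
        linear_combination hY k hk - hu k hk
      refine (abs_le_of_implicit_step hK hh hhK (hf _ (hYS _ hk) _ (huS _ hk)) hd).trans ?_
      gcongr
      exact (abs_add_le _ _).trans (by gcongr; exact hI k hk)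
  intro k hk
  calc |Y k - u k| ≤ k * (1 + 2 * h * K) ^ k * (h * ε) :=
        le_mul_pow_mul_of_le_mul_add (e := fun k => |Y k - u k|) (by nlinarith) (by positivity)
          (by simp [h₀]) hrec k hk
    _ ≤ k * Real.exp (2 * h * K) ^ k * (h * ε) := by
        gcongr
        linarith [Real.add_one_le_exp (2 * h * K)]
    _ = _ := by rw [← Real.exp_nat_mul]; ring_nf

lemma abs_mul_sub_integral_le {g : ℝ → ℝ} {a b ε : ℝ} (hab : a ≤ b)
    (hg : IntervalIntegrable g volume a b) (hε : ∀ s ∈ Icc a b, |g s - g b| ≤ ε) :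
    |(b - a) * g b - ∫ s in a..b, g s| ≤ (b - a) * ε := by
  have hrw : (b - a) * g b - ∫ s in a..b, g s = ∫ s in a..b, (g b - g s) := by
    rw [integral_sub intervalIntegrable_const hg, intervalIntegral.integral_const, smul_eq_mul]
  have hbound : ∀ s ∈ uIoc a b, ‖g b - g s‖ ≤ ε := fun s hs => by
    rw [uIoc_of_le hab] at hs
    rw [Real.norm_eq_abs, abs_sub_comm]
    exact hε s (Ioc_subset_Icc_self hs)
  have := intervalIntegral.norm_integral_le_of_norm_le_const hbound
  rwa [Real.norm_eq_abs, abs_of_nonneg (sub_nonneg.2 hab), mul_comm, ← hrw] at this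

lemma eq_add_integral_add_of_forall_eq {φ y w : ℝ → ℝ} {c σ T a b : ℝ}
    (hφ : ContinuousOn φ (Icc 0 T))
    (hy : ∀ t ∈ Icc 0 T, y t = c + (∫ s in (0 : ℝ)..t, φ s) + σ * w t)
    (ha : a ∈ Icc 0 T) (hb : b ∈ Icc 0 T) :
    y b = y a + (∫ s in a..b, φ s) + σ * (w b - w a) := by
  have hint {t : ℝ} (ht : t ∈ Icc 0 T) : IntervalIntegrable φ volume 0 t :=
    (hφ.mono (uIcc_subset_Icc (left_mem_Icc.2 (ha.1.trans ha.2)) ht)).intervalIntegrable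
  rw [hy b hb, hy a ha, ← integral_interval_sub_left (hint hb) (hint ha)]
  ring

lemma natCast_mul_div_mem_Icc {T : ℝ} (hT : 0 ≤ T) {k n : ℕ} (hk : k ≤ n) :
    (k : ℝ) * T / n ∈ Icc 0 T := by
  rcases n.eq_zero_or_pos with rfl | hn
  · simpa using hT
  refine ⟨by positivity, div_le_of_le_mul₀ (by positivity) hT ?_⟩
  rw [mul_comm]
  exact mul_le_mul_of_nonneg_left (by exact_mod_cast hk) hT

theorem abs_implicitEuler_sub_le {f w y : ℝ → ℝ} {Y : ℕ → ℝ} {S : Set ℝ} {c σ T K M α : ℝ}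
    {n : ℕ} (hT : 0 ≤ T) (hK : 0 ≤ K) (hM : 0 ≤ M) (hα : 0 ≤ α)
    (hTK : T / n * K ≤ 1 / 2)
    (hf : ∀ z₁ ∈ S, ∀ z₂ ∈ S, (f z₁ - f z₂) * (z₁ - z₂) ≤ K * (z₁ - z₂) ^ 2)
    (hfy_cont : ContinuousOn (fun t => f (y t)) (Icc 0 T))
    (hfy : ∀ s ∈ Icc 0 T, ∀ t ∈ Icc 0 T, |f (y t) - f (y s)| ≤ M * |t - s| ^ α)
    (hyS : ∀ t ∈ Icc 0 T, y t ∈ S) (hw₀ : w 0 = 0)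
    (hy : ∀ t ∈ Icc 0 T, y t = c + (∫ s in (0 : ℝ)..t, f (y s)) + σ * w t)
    (hY₀ : Y 0 = c)
    (hY : ∀ k < n, Y (k + 1) = Y k + T / n * f (Y (k + 1)) +
      σ * (w (((k : ℝ) + 1) * T / n) - w ((k : ℝ) * T / n)))
    (hYS : ∀ k ≤ n, Y k ∈ S) :
    ∀ k ≤ n, |Y k - y (k * T / n)| ≤ T * M * Real.exp (2 * K * T) * (T / n) ^ α := by
  have hnode (k : ℕ) (hk : k ≤ n) := natCast_mul_div_mem_Icc hT hk
  have hu (k : ℕ) (hk : k < n) : y ((k + 1 : ℕ) * T / n) = y (k * T / n) +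
      (∫ s in (k * T / n)..((k + 1 : ℕ) * T / n), f (y s)) +
      σ * (w (((k : ℝ) + 1) * T / n) - w ((k : ℝ) * T / n)) := by
    have := eq_add_integral_add_of_forall_eq hfy_cont hy (hnode k hk.le) (hnode (k + 1) hk)
    push_cast at this ⊢
    exact this
  have hI (k : ℕ) (hk : k < n) : |T / n * f (y ((k + 1 : ℕ) * T / n)) -
      ∫ s in (k * T / n)..((k + 1 : ℕ) * T / n), f (y s)| ≤ T / n * (M * (T / n) ^ α) := by
    have hstep : ((k + 1 : ℕ) : ℝ) * T / n - k * T / n = T / n := by push_cast; ring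
    have hlen : k * T / n ≤ ((k + 1 : ℕ) : ℝ) * T / n := by
      linarith [(by positivity : 0 ≤ T / n)]
    have hsub : Icc (k * T / n) ((k + 1 : ℕ) * T / n) ⊆ Icc 0 T :=
      Icc_subset_Icc (hnode k hk.le).1 (hnode (k + 1) hk).2
    rw [← hstep]
    refine abs_mul_sub_integral_le hlen
      ((hfy_cont.mono (uIcc_of_le hlen ▸ hsub)).intervalIntegrable) fun s hs => ?_
    refine (hfy _ (hnode (k + 1) hk) s (hsub hs)).trans (mul_le_mul_of_nonneg_left ?_ hM)
    refine Real.rpow_le_rpow (abs_nonneg _) ?_ hα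
    rw [abs_sub_comm, abs_of_nonneg (by linarith [hs.2])]
    linarith [hs.1]
  have herr := abs_sub_le_of_implicitEuler (u := fun k => y (k * T / n)) hK (by positivity) hTK
    (by positivity) hf hYS (fun k hk => hyS _ (hnode k hk))
    (by simp [hY₀, hy 0 (left_mem_Icc.2 hT), hw₀]) hY hu hI
  intro k hk
  calc |Y k - y (k * T / n)| ≤ k * (T / n) * (M * (T / n) ^ α) * Real.exp (2 * K * (k * (T / n))) :=
        herr k hk
    _ ≤ T * (M * (T / n) ^ α) * Real.exp (2 * K * T) := by
        have : k * (T / n) ≤ T := by simpa [mul_div_assoc] using (hnode k hk).2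
        gcongr
    _ = _ := by ring

lemma interp_mem_of_convex {T : ℝ} (hT : 0 < T) {n : ℕ} (hn : 0 < n) {Z : ℕ → ℝ} {s : Set ℝ}
    (hs : Convex ℝ s) {t : ℝ} (ht : t ∈ Icc 0 T)
    (hZ : ∀ j ≤ n, |t - j * T / n| ≤ T / n → Z j ∈ s) : interp T n Z t ∈ s := by
  have hn' : (0 : ℝ) < n := by exact_mod_cast hn
  set q := t * n / T with hq
  set k := ⌊q⌋₊
  have hkq : (k : ℝ) ≤ q := Nat.floor_le (by have := ht.1; positivity)
  have hqk : q < k + 1 := Nat.lt_floor_add_one q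
  have hqn : q ≤ n := by rw [hq, div_le_iff₀ hT]; nlinarith [ht.2]
  have hdist (j : ℕ) : |t - j * T / n| = |q - j| * (T / n) := by
    rw [← abs_of_pos (div_pos hT hn'), ← abs_mul, hq]
    congr 1
    field_simp
  have hinterp : interp T n Z t = (1 - (q - k)) • Z k + (q - k) • Z (k + 1) := by
    simp only [interp, smul_eq_mul]; ring
  have hZk : Z k ∈ s := by
    refine hZ k (by exact_mod_cast hkq.trans hqn) ?_
    rw [hdist, abs_of_nonneg (by linarith)]
    exact mul_le_of_le_one_left (by positivity) (by linarith)
  rcases (sub_nonneg.2 hkq).eq_or_lt with h0 | hpos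
  · rwa [hinterp, ← h0, sub_zero, one_smul, zero_smul, add_zero]
  have hk1 : k + 1 ≤ n := by
    have : (k : ℝ) < n := by linarith
    exact_mod_cast this
  refine hinterp ▸ hs hZk (hZ (k + 1) hk1 ?_) (by linarith) hpos.le (by ring)
  rw [hdist, abs_of_nonpos (by push_cast; linarith)]
  exact mul_le_of_le_one_left (by positivity) (by push_cast; linarith)

lemma abs_interp_sub_le {T : ℝ} (hT : 0 < T) {n : ℕ} (hn : 0 < n) {Z : ℕ → ℝ} {y : ℝ → ℝ}
    {A C α : ℝ} (hα : 0 ≤ α) (hC : 0 ≤ C) (hZ : ∀ k ≤ n, |Z k - y (k * T / n)| ≤ A)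
    (hy : ∀ s ∈ Icc 0 T, ∀ t ∈ Icc 0 T, |y t - y s| ≤ C * |t - s| ^ α) {t : ℝ}
    (ht : t ∈ Icc 0 T) : |interp T n Z t - y t| ≤ A + C * (T / n) ^ α := by
  rw [← Real.dist_eq, ← Metric.mem_closedBall]
  refine interp_mem_of_convex hT hn (convex_closedBall _ _) ht fun j hj hdist => ?_
  rw [Metric.mem_closedBall, Real.dist_eq]
  have hyj := hy t ht _ (natCast_mul_div_mem_Icc hT.le hj)
  rw [abs_sub_comm (j * T / n)] at hyj
  calc |Z j - y t| ≤ |Z j - y (j * T / n)| + |y (j * T / n) - y t| := abs_sub_le _ _ _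
    _ ≤ A + C * (T / n) ^ α := add_le_add (hZ j hj) (hyj.trans (by gcongr))

lemma continuousOn_of_abs_sub_le_mul_rpow {f : ℝ → ℝ} {s : Set ℝ} {C α : ℝ} (hα : 0 < α)
    (h : ∀ x ∈ s, ∀ y ∈ s, |f y - f x| ≤ C * |y - x| ^ α) : ContinuousOn f s := by
  have hf : HolderOnWith C.toNNReal α.toNNReal f s := fun x hx y hy => by
    rw [edist_dist, edist_dist, Real.coe_toNNReal _ hα.le,
      ENNReal.ofReal_rpow_of_nonneg dist_nonneg hα.le,
      ← ENNReal.ofReal_coe_nnreal, ← ENNReal.ofReal_mul (by positivity)]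
    refine ENNReal.ofReal_le_ofReal ?_
    rw [Real.dist_eq, Real.dist_eq, abs_sub_comm, abs_sub_comm x]
    exact (h x hx y hy).trans (by gcongr; exact Real.le_coe_toNNReal C)
  exact hf.continuousOn (Real.toNNReal_pos.2 hα)

lemma IsCompact.exists_mapsTo_Icc_of_mapsTo_Ioo {y : ℝ → ℝ} {s : Set ℝ} {a b : ℝ}
    (hs : IsCompact s) (hne : s.Nonempty) (hy : ContinuousOn y s) (hmaps : MapsTo y s (Ioo a b)) :
    ∃ m ∈ Ioo a b, ∃ M ∈ Ioo a b, MapsTo y s (Icc m M) := by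
  obtain ⟨s₁, hs₁, hmin⟩ := hs.exists_isMinOn hne hy
  obtain ⟨s₂, hs₂, hmax⟩ := hs.exists_isMaxOn hne hy
  exact ⟨y s₁, hmaps hs₁, y s₂, hmaps hs₂, fun t ht => ⟨hmin ht, hmax ht⟩⟩

lemma exists_pos_forall_le_mul_rpow_neg {ι : Type*} {α B C N : ℝ} (hα : 0 ≤ α) (hN : 0 ≤ N)
    {u : ℕ → ι → ℝ} (hB : ∀ n : ℕ, 0 < n → ∀ i, u n i ≤ B)
    (hlarge : ∀ n : ℕ, N < n → ∀ i, u n i ≤ C * (n : ℝ) ^ (-α)) :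
    ∃ C' > 0, ∀ n : ℕ, 0 < n → ∀ i, u n i ≤ C' * (n : ℝ) ^ (-α) := by
  have hBN : 0 ≤ |B| * N ^ α := by positivity
  refine ⟨max C (|B| * N ^ α) + 1, by linarith [le_max_right C (|B| * N ^ α)], fun n hn i => ?_⟩
  have hn' : (0 : ℝ) < n := by exact_mod_cast hn
  have hpow : 0 < (n : ℝ) ^ (-α) := Real.rpow_pos_of_pos hn' _
  calc u n i ≤ max C (|B| * N ^ α) * (n : ℝ) ^ (-α) := by
        rcases lt_or_ge N n with hnN | hnN
        · exact (hlarge n hnN i).trans (by gcongr; exact le_max_left _ _)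
        have hratio : 1 ≤ N ^ α * (n : ℝ) ^ (-α) := by
          rw [Real.rpow_neg hn'.le, ← div_eq_mul_inv, one_le_div (Real.rpow_pos_of_pos hn' _)]
          exact Real.rpow_le_rpow hn'.le hnN hα
        calc u n i ≤ |B| * 1 := by linarith [hB n hn i, le_abs_self B]
          _ ≤ |B| * (N ^ α * (n : ℝ) ^ (-α)) := by gcongr
          _ = |B| * N ^ α * (n : ℝ) ^ (-α) := by ring
          _ ≤ _ := by gcongr; exact le_max_right _ _
    _ ≤ _ := by gcongr; linarith

section F1

variable {β : ℝ}

lemma intervalIntegrable_F1_integrand_zero_one (hβ : β < 1) :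
    IntervalIntegrable (fun v : ℝ => (v * (1 - v)) ^ (-β)) volume 0 1 := by
  have hhalf : IntervalIntegrable (fun v : ℝ => (v * (1 - v)) ^ (-β)) volume 0 (1 / 2) := by
    have hpow : IntervalIntegrable (fun v : ℝ => v ^ (-β)) volume 0 (1 / 2) :=
      intervalIntegrable_rpow' (by linarith)
    have hcont : ContinuousOn (fun v : ℝ => (1 - v) ^ (-β)) (uIcc 0 (1 / 2)) := by
      refine ContinuousOn.rpow_const (by fun_prop) fun v hv => Or.inl ?_
      rw [uIcc_of_le (by norm_num)] at hv
      linarith [hv.2]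
    refine (hpow.mul_continuousOn hcont).congr fun v hv => ?_
    rw [uIoc_of_le (by norm_num)] at hv
    exact (Real.mul_rpow hv.1.le (by linarith [hv.2])).symm
  have hsymm : IntervalIntegrable (fun v : ℝ => (v * (1 - v)) ^ (-β)) volume (1 / 2) 1 := by
    have := (hhalf.comp_sub_left 1).symm
    norm_num at this
    convert this using 2 with v
    ring_nf
  exact hhalf.trans hsymm

lemma intervalIntegrable_F1_integrand (hβ : β < 1) {a b : ℝ} (ha : a ∈ Icc (0 : ℝ) 1)
    (hb : b ∈ Icc (0 : ℝ) 1) :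
    IntervalIntegrable (fun v : ℝ => (v * (1 - v)) ^ (-β)) volume a b :=
  (intervalIntegrable_F1_integrand_zero_one hβ).mono_set <| by
    rw [uIcc_of_le zero_le_one]
    exact uIcc_subset_Icc ha hb

@[simp] lemma F1_zero : F1 β 0 = 0 := integral_same

lemma sub_le_F1_sub_F1 (hβ₀ : 0 ≤ β) (hβ : β < 1) {u v : ℝ} (hv : 0 ≤ v) (hvu : v ≤ u)
    (hu : u ≤ 1) : u - v ≤ F1 β u - F1 β v := by
  have hv' : v ∈ Icc (0 : ℝ) 1 := ⟨hv, hvu.trans hu⟩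
  have hu' : u ∈ Icc (0 : ℝ) 1 := ⟨hv.trans hvu, hu⟩
  have h₀ : (0 : ℝ) ∈ Icc (0 : ℝ) 1 := ⟨le_rfl, zero_le_one⟩
  rw [F1, F1, integral_interval_sub_left (intervalIntegrable_F1_integrand hβ h₀ hu')
    (intervalIntegrable_F1_integrand hβ h₀ hv')]
  calc u - v = ∫ _ in v..u, (1 : ℝ) := by simp
    _ ≤ _ := integral_mono_on_of_le_Ioo hvu intervalIntegrable_const
      (intervalIntegrable_F1_integrand hβ hv' hu') fun x hx => ?_
  exact Real.one_le_rpow_of_pos_of_le_one_of_nonpos (by nlinarith [hx.1, hx.2])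
    (by nlinarith [sq_nonneg (x - 1 / 2)]) (by linarith)

lemma strictMonoOn_F1 (hβ₀ : 0 ≤ β) (hβ : β < 1) : StrictMonoOn (F1 β) (Icc 0 1) :=
  fun v hv u hu hvu => by linarith [sub_le_F1_sub_F1 hβ₀ hβ hv.1 hvu.le hu.2]

lemma continuousOn_F1 (hβ : β < 1) : ContinuousOn (F1 β) (Icc 0 1) := by
  have := continuousOn_primitive_interval' (intervalIntegrable_F1_integrand_zero_one hβ)
    left_mem_uIcc
  rwa [uIcc_of_le zero_le_one] at this

lemma surjOn_F1 (hβ : β < 1) : SurjOn (F1 β) (Icc 0 1) (Icc 0 (F1 β 1)) :=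
  fun z hz => intermediate_value_Icc zero_le_one (continuousOn_F1 hβ) (by simpa using hz)

lemma F1inv_mem_Icc (hβ : β < 1) {z : ℝ} (hz : z ∈ Icc 0 (F1 β 1)) :
    F1inv β z ∈ Icc (0 : ℝ) 1 :=
  (surjOn_F1 hβ).mapsTo_invFunOn hz

lemma F1_F1inv (hβ : β < 1) {z : ℝ} (hz : z ∈ Icc 0 (F1 β 1)) : F1 β (F1inv β z) = z :=
  (surjOn_F1 hβ).rightInvOn_invFunOn hz

lemma monotoneOn_F1inv (hβ₀ : 0 ≤ β) (hβ : β < 1) : MonotoneOn (F1inv β) (Icc 0 (F1 β 1)) :=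
  fun z₁ hz₁ z₂ hz₂ h => by
    rwa [← (strictMonoOn_F1 hβ₀ hβ).le_iff_le (F1inv_mem_Icc hβ hz₁) (F1inv_mem_Icc hβ hz₂),
      F1_F1inv hβ hz₁, F1_F1inv hβ hz₂]

lemma F1inv_sub_F1inv_le (hβ₀ : 0 ≤ β) (hβ : β < 1) {z₁ z₂ : ℝ}
    (hz₁ : z₁ ∈ Icc 0 (F1 β 1)) (hz₂ : z₂ ∈ Icc 0 (F1 β 1)) (h : z₁ ≤ z₂) :
    F1inv β z₂ - F1inv β z₁ ≤ z₂ - z₁ := by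
  simpa only [F1_F1inv hβ hz₁, F1_F1inv hβ hz₂] using
    sub_le_F1_sub_F1 hβ₀ hβ (F1inv_mem_Icc hβ hz₁).1 (monotoneOn_F1inv hβ₀ hβ hz₁ hz₂ h)
      (F1inv_mem_Icc hβ hz₂).2

lemma lipschitzOnWith_F1inv (hβ₀ : 0 ≤ β) (hβ : β < 1) :
    LipschitzOnWith 1 (F1inv β) (Icc 0 (F1 β 1)) := by
  refine LipschitzOnWith.mk_one fun z₁ hz₁ z₂ hz₂ => ?_
  wlog h : z₁ ≤ z₂ generalizing z₁ z₂
  · rw [dist_comm, dist_comm z₁]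
    exact this _ hz₂ _ hz₁ (le_of_not_ge h)
  rw [dist_comm, dist_comm z₁, Real.dist_eq, Real.dist_eq,
    abs_of_nonneg (sub_nonneg.2 (monotoneOn_F1inv hβ₀ hβ hz₁ hz₂ h)),
    abs_of_nonneg (sub_nonneg.2 h)]
  exact F1inv_sub_F1inv_le hβ₀ hβ hz₁ hz₂ h

lemma abs_F1inv_sub_F1inv_le (hβ₀ : 0 ≤ β) (hβ : β < 1) {z₁ z₂ : ℝ}
    (hz₁ : z₁ ∈ Icc 0 (F1 β 1)) (hz₂ : z₂ ∈ Icc 0 (F1 β 1)) :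
    |F1inv β z₁ - F1inv β z₂| ≤ |z₁ - z₂| := by
  simpa only [Real.dist_eq, NNReal.coe_one, one_mul] using
    (lipschitzOnWith_F1inv hβ₀ hβ).dist_le_mul _ hz₁ _ hz₂

lemma abs_F1inv_sub_F1inv_le_one (hβ : β < 1) {z₁ z₂ : ℝ} (hz₁ : z₁ ∈ Icc 0 (F1 β 1))
    (hz₂ : z₂ ∈ Icc 0 (F1 β 1)) : |F1inv β z₁ - F1inv β z₂| ≤ 1 :=
  abs_sub_le_of_nonneg_of_le (F1inv_mem_Icc hβ hz₁).1 (F1inv_mem_Icc hβ hz₁).2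
    (F1inv_mem_Icc hβ hz₂).1 (F1inv_mem_Icc hβ hz₂).2

lemma F1inv_mem_Ioo (hβ : β < 1) {z : ℝ} (hz : z ∈ Ioo 0 (F1 β 1)) :
    F1inv β z ∈ Ioo (0 : ℝ) 1 := by
  have hz' : z ∈ Icc 0 (F1 β 1) := Ioo_subset_Icc_self hz
  refine ⟨(F1inv_mem_Icc hβ hz').1.lt_of_ne fun h => ?_,
    (F1inv_mem_Icc hβ hz').2.lt_of_ne fun h => ?_⟩
  · exact hz.1.ne (by rw [← F1_F1inv hβ hz', ← h, F1_zero])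
  · exact hz.2.ne (by rw [← F1_F1inv hβ hz', h])

end F1

section G

variable {β θ μ : ℝ}

lemma hasDerivAt_F1 (hβ : β < 1) {x : ℝ} (hx : x ∈ Ioo (0 : ℝ) 1) :
    HasDerivAt (F1 β) ((x * (1 - x)) ^ (-β)) x := by
  have hu : x * (1 - x) ≠ 0 := by nlinarith [hx.1, hx.2]
  refine integral_hasDerivAt_right
    (intervalIntegrable_F1_integrand hβ ⟨le_rfl, zero_le_one⟩ (Ioo_subset_Icc_self hx)) ?_ ?_
  · exact (by fun_prop : Measurable fun v : ℝ => (v * (1 - v)) ^ (-β)).stronglyMeasurable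
      |>.stronglyMeasurableAtFilter
  · exact (by fun_prop : ContinuousAt (fun v : ℝ => v * (1 - v)) x).rpow_const (Or.inl hu)

lemma hasDerivAt_G {x : ℝ} (hx : x ∈ Ioo (0 : ℝ) 1) :
    HasDerivAt (G β θ μ) (-θ * (x * (1 - x)) ^ (-β)
      - θ * β * (μ - x) * (1 - 2 * x) * (x * (1 - x)) ^ (-β - 1)) x := by
  have hu : x * (1 - x) ≠ 0 := by nlinarith [hx.1, hx.2]
  have hpoly : HasDerivAt (fun v : ℝ => v * (1 - v)) (1 - 2 * x) x :=
    ((hasDerivAt_id' x).fun_mul ((hasDerivAt_const x 1).fun_sub (hasDerivAt_id' x))).congr_deriv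
      (by ring)
  exact ((((hasDerivAt_const x μ).fun_sub (hasDerivAt_id' x)).const_mul θ).fun_mul
    (hpoly.rpow_const (p := -β) (Or.inl hu))).congr_deriv (by ring)

lemma monotoneOn_F1_sub_G (hβ₀ : 0 ≤ β) (hβ : β < 1) (hθ : 0 ≤ θ) (hμ : μ ∈ Icc (0 : ℝ) 1) :
    MonotoneOn (fun x => 2 * θ * β * F1 β x - G β θ μ x) (Ioo 0 1) := by
  have hderiv (x : ℝ) (hx : x ∈ Ioo (0 : ℝ) 1) :=
    ((hasDerivAt_F1 hβ hx).const_mul (2 * θ * β)).sub (hasDerivAt_G (β := β) (θ := θ) (μ := μ) hx)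
  refine monotoneOn_of_hasDerivWithinAt_nonneg (convex_Ioo 0 1)
    (fun x hx => (hderiv x hx).continuousAt.continuousWithinAt)
    (fun x hx => (hderiv x (interior_subset hx)).hasDerivWithinAt) fun x hx => ?_
  rw [interior_Ioo] at hx
  set u := x * (1 - x)
  have hu : 0 < u := by nlinarith [hx.1, hx.2]
  have hrpow : u ^ (-β - 1) * u = u ^ (-β) := by
    rw [← Real.rpow_add_one hu.ne']; ring_nf
  have hpoly : -((μ - x) * (1 - 2 * x)) ≤ 2 * u := by nlinarith [hμ.1, hμ.2, hx.1, hx.2]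
  have hθβ : 0 ≤ θ * β * u ^ (-β - 1) := by positivity
  have key : -(θ * β * (μ - x) * (1 - 2 * x) * u ^ (-β - 1)) ≤ 2 * θ * β * u ^ (-β) :=
    calc _ = θ * β * u ^ (-β - 1) * -((μ - x) * (1 - 2 * x)) := by ring
      _ ≤ θ * β * u ^ (-β - 1) * (2 * u) := mul_le_mul_of_nonneg_left hpoly hθβ
      _ = 2 * θ * β * (u ^ (-β - 1) * u) := by ring
      _ = _ := by rw [hrpow]
  have : 0 ≤ θ * u ^ (-β) := by positivity
  linarith

lemma G_F1inv_sub_mul_sub_le (hβ₀ : 0 ≤ β) (hβ : β < 1) (hθ : 0 ≤ θ)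
    (hμ : μ ∈ Icc (0 : ℝ) 1) {z₁ z₂ : ℝ} (hz₁ : z₁ ∈ Ioo 0 (F1 β 1))
    (hz₂ : z₂ ∈ Ioo 0 (F1 β 1)) :
    (G β θ μ (F1inv β z₁) - G β θ μ (F1inv β z₂)) * (z₁ - z₂) ≤ 2 * θ * β * (z₁ - z₂) ^ 2 := by
  wlog h : z₂ ≤ z₁ generalizing z₁ z₂
  · nlinarith [this hz₂ hz₁ (le_of_not_ge h)]
  have hz₁' := Ioo_subset_Icc_self hz₁
  have hz₂' := Ioo_subset_Icc_self hz₂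
  have hmono := monotoneOn_F1_sub_G hβ₀ hβ hθ hμ (F1inv_mem_Ioo hβ hz₂) (F1inv_mem_Ioo hβ hz₁)
    (monotoneOn_F1inv hβ₀ hβ hz₂' hz₁' h)
  simp only [F1_F1inv hβ hz₁', F1_F1inv hβ hz₂'] at hmono
  nlinarith

lemma exists_lipschitzOnWith_G {a b : ℝ} (ha : 0 < a) (hb : b < 1) :
    ∃ L, LipschitzOnWith L (G β θ μ) (Icc a b) := by
  refine ContDiffOn.exists_lipschitzOnWith (n := 1) ?_ one_ne_zero (convex_Icc a b) isCompact_Icc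
  refine ContDiffOn.mul (by fun_prop) (ContDiffOn.rpow_const_of_ne (by fun_prop) fun x hx => ?_)
  nlinarith [hx.1, hx.2]

lemma exists_lipschitzOnWith_G_F1inv (hβ₀ : 0 ≤ β) (hβ : β < 1) {m M : ℝ}
    (hm : m ∈ Ioo 0 (F1 β 1)) (hM : M ∈ Ioo 0 (F1 β 1)) :
    ∃ L, LipschitzOnWith L (fun z => G β θ μ (F1inv β z)) (Icc m M) := by
  obtain ⟨L, hL⟩ := exists_lipschitzOnWith_G (β := β) (θ := θ) (μ := μ)
    (F1inv_mem_Ioo hβ hm).1 (F1inv_mem_Ioo hβ hM).2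
  have hsub : Icc m M ⊆ Icc 0 (F1 β 1) := Icc_subset_Icc hm.1.le hM.2.le
  have hmono := monotoneOn_F1inv hβ₀ hβ
  exact ⟨L * 1, hL.comp ((lipschitzOnWith_F1inv hβ₀ hβ).mono hsub) fun z hz =>
    ⟨hmono (Ioo_subset_Icc_self hm) (hsub hz) hz.1, hmono (hsub hz) (Ioo_subset_Icc_self hM) hz.2⟩⟩

lemma exists_abs_G_F1inv_comp_sub_le (hβ₀ : 0 ≤ β) (hβ : β < 1) {y : ℝ → ℝ} {T C α : ℝ}
    (hT : 0 ≤ T) (hC : 0 ≤ C) (hym : ∀ t ∈ Icc 0 T, y t ∈ Ioo 0 (F1 β 1))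
    (hyc : ContinuousOn y (Icc 0 T))
    (hyH : ∀ s ∈ Icc 0 T, ∀ t ∈ Icc 0 T, |y t - y s| ≤ C * |t - s| ^ α) :
    ∃ M, 0 ≤ M ∧ ∀ s ∈ Icc 0 T, ∀ t ∈ Icc 0 T,
      |G β θ μ (F1inv β (y t)) - G β θ μ (F1inv β (y s))| ≤ M * |t - s| ^ α := by
  obtain ⟨m, hm, M, hM, hrange⟩ :=
    isCompact_Icc.exists_mapsTo_Icc_of_mapsTo_Ioo ⟨0, left_mem_Icc.2 hT⟩ hyc hym
  obtain ⟨L, hL⟩ := exists_lipschitzOnWith_G_F1inv (θ := θ) (μ := μ) hβ₀ hβ hm hM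
  refine ⟨L * C, by positivity, fun s hs t ht => ?_⟩
  calc |G β θ μ (F1inv β (y t)) - G β θ μ (F1inv β (y s))|
      ≤ L * |y t - y s| := by
        simpa only [Real.dist_eq] using hL.dist_le_mul _ (hrange ht) _ (hrange hs)
    _ ≤ L * (C * |t - s| ^ α) := by gcongr; exact hyH s hs t ht
    _ = _ := by ring

end G

theorem stmt18_general (α β θ μ γ T x₀ : ℝ) (hα : α ∈ Set.Ioc (0:ℝ) 1)
    (hβ : β ∈ Set.Ioo (1 - α) 1) (hθ : 0 < θ) (hμ : μ ∈ Set.Ioo (0:ℝ) 1)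
    (hT : 0 < T)
    (w : ℝ → ℝ) (hw0 : w 0 = 0)
    (y : ℝ → ℝ)
    (hym : ∀ t ∈ Set.Icc (0:ℝ) T, y t ∈ Set.Ioo 0 (F1 β 1))
    (hye : ∀ t ∈ Set.Icc (0:ℝ) T,
      y t = F1 β x₀ + (∫ s in (0:ℝ)..t, G β θ μ (F1inv β (y s))) + γ * θ ^ β * w t)
    (hyH : ∃ C : ℝ, ∀ s ∈ Set.Icc (0:ℝ) T, ∀ t ∈ Set.Icc (0:ℝ) T,
      |y t - y s| ≤ C * |t - s| ^ α)
    (Y : ℕ → ℕ → ℝ)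
    (hY : ∀ n : ℕ, 0 < n →
      Y n 0 = F1 β x₀ ∧
      (∀ k < n, Y n (k + 1) = Y n k + (T / n) * G β θ μ (F1inv β (Y n (k + 1))) +
        γ * θ ^ β * (w (((k : ℝ) + 1) * T / n) - w ((k : ℝ) * T / n))) ∧
      (∀ k ≤ n, Y n k ∈ Set.Ioo 0 (F1 β 1))) :
    ∃ C' : ℝ, 0 < C' ∧ ∀ n : ℕ, 0 < n → ∀ t ∈ Set.Icc (0:ℝ) T,
      |F1inv β (interp T n (Y n) t) - F1inv β (y t)| ≤ C' * (n : ℝ) ^ (-α) := by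
  obtain ⟨hα₀, hα₁⟩ := hα
  have hβ₀ : 0 ≤ β := by linarith [hβ.1]
  obtain ⟨Cy, hyH⟩ := hyH
  replace hyH : ∀ s ∈ Icc 0 T, ∀ t ∈ Icc 0 T, |y t - y s| ≤ max Cy 0 * |t - s| ^ α :=
    fun s hs t ht => (hyH s hs t ht).trans (by gcongr; exact le_max_left _ _)
  obtain ⟨M, hM, hfy⟩ := exists_abs_G_F1inv_comp_sub_le (θ := θ) (μ := μ) hβ₀ hβ.2 hT.le
    (le_max_right _ _) hym (continuousOn_of_abs_sub_le_mul_rpow hα₀ hyH) hyH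
  set K := 2 * θ * β
  have hyt (t : Icc 0 T) : y t ∈ Icc 0 (F1 β 1) := Ioo_subset_Icc_self (hym t t.2)
  have hinterp (n : ℕ) (hn : 0 < n) (t : Icc 0 T) : interp T n (Y n) t ∈ Icc 0 (F1 β 1) :=
    interp_mem_of_convex hT hn (convex_Icc _ _) t.2 fun j hj _ =>
      Ioo_subset_Icc_self ((hY n hn).2.2 j hj)
  obtain ⟨C', hC', hbound⟩ := exists_pos_forall_le_mul_rpow_neg (ι := Icc 0 T) hα₀.le
    (u := fun n t => |F1inv β (interp T n (Y n) t) - F1inv β (y t)|) (N := 2 * K * T)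
    (C := (T * M * Real.exp (2 * K * T) + max Cy 0) * T ^ α) (by positivity)
    (fun n hn t => abs_F1inv_sub_F1inv_le_one hβ.2 (hinterp n hn t) (hyt t)) fun n hnN t => by
      have hn' : (0 : ℝ) < n := lt_of_le_of_lt (by positivity) hnN
      have hn : 0 < n := by exact_mod_cast hn'
      have hnK : T / n * K ≤ 1 / 2 := by rw [div_mul_eq_mul_div, div_le_iff₀ hn']; linarith
      have hnode := abs_implicitEuler_sub_le hT.le (by positivity) hM hα₀.le hnK
        (fun _ hz₁ _ hz₂ => G_F1inv_sub_mul_sub_le hβ₀ hβ.2 hθ.le (Ioo_subset_Icc_self hμ) hz₁ hz₂)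
        (continuousOn_of_abs_sub_le_mul_rpow hα₀ hfy) hfy hym hw0 hye (hY n hn).1 (hY n hn).2.1
        (hY n hn).2.2
      calc _ ≤ |interp T n (Y n) t - y t| :=
            abs_F1inv_sub_F1inv_le hβ₀ hβ.2 (hinterp n hn t) (hyt t)
        _ ≤ T * M * Real.exp (2 * K * T) * (T / n) ^ α + max Cy 0 * (T / n) ^ α :=
            abs_interp_sub_le hT hn hα₀.le (le_max_right _ _) hnode hyH t.2
        _ = _ := by rw [Real.div_rpow hT.le hn'.le, Real.rpow_neg hn'.le]; ring
  exact ⟨C', hC', fun n hn t ht => hbound n hn ⟨t, ht⟩⟩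

theorem stmt18 (α β θ μ γ T x₀ : ℝ) (hα : α ∈ Set.Ioc (0:ℝ) 1)
    (hβ : β ∈ Set.Ioo (1 - α) 1) (hθ : 0 < θ) (hμ : μ ∈ Set.Ioo (0:ℝ) 1)
    (hT : 0 < T) (hx₀ : x₀ ∈ Set.Ioo (0:ℝ) 1)
    (w : ℝ → ℝ) (hw0 : w 0 = 0)
    (hw : ∃ C : ℝ, ∀ s ∈ Set.Icc (0:ℝ) T, ∀ t ∈ Set.Icc (0:ℝ) T,
      |w t - w s| ≤ C * |t - s| ^ α)
    (y : ℝ → ℝ)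
    (hym : ∀ t ∈ Set.Icc (0:ℝ) T, y t ∈ Set.Ioo 0 (F1 β 1))
    (hye : ∀ t ∈ Set.Icc (0:ℝ) T,
      y t = F1 β x₀ + (∫ s in (0:ℝ)..t, G β θ μ (F1inv β (y s))) + γ * θ ^ β * w t)
    (hyH : ∃ C : ℝ, ∀ s ∈ Set.Icc (0:ℝ) T, ∀ t ∈ Set.Icc (0:ℝ) T,
      |y t - y s| ≤ C * |t - s| ^ α)
    (Y : ℕ → ℕ → ℝ)
    (hY : ∀ n : ℕ, 0 < n →
      Y n 0 = F1 β x₀ ∧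
      (∀ k < n, Y n (k + 1) = Y n k + (T / n) * G β θ μ (F1inv β (Y n (k + 1))) +
        γ * θ ^ β * (w (((k : ℝ) + 1) * T / n) - w ((k : ℝ) * T / n))) ∧
      (∀ k ≤ n, Y n k ∈ Set.Ioo 0 (F1 β 1))) :
    ∃ C' : ℝ, 0 < C' ∧ ∀ n : ℕ, 0 < n → ∀ t ∈ Set.Icc (0:ℝ) T,
      |F1inv β (interp T n (Y n) t) - F1inv β (y t)| ≤ C' * (n : ℝ) ^ (-α) :=
  stmt18_general α β θ μ γ T x₀ hα hβ hθ hμ hT w hw0 y hym hye hyH Y hY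
end

section
/- For every ω ∈ Ω there exists Ŷ(ω) ∈ X such that: (i) for every x ∈ X, d(φ(t, θ_{-t}ω) x, Ŷ(ω)) → 0 as t → ∞ (in particular the limit does not depend on x); and (ii) φ(t, ω) Ŷ(ω) = Ŷ(θ_t ω) for every t ∈ ℝ₊, i.e. Ŷ is a random fixed point of the cocycle φ. -/
/-!
Pulling back to time `-t` and running the cocycle for time `t` gives a family of maps
`φ(t, θ_{-t} ω)` which, by the cocycle property, factors through `φ(s, θ_{-s} ω)` for `s ≤ t`;
uniform contraction and the finite diameter therefore make `t ↦ φ(t, θ_{-t} ω) x` Cauchy, with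
a limit independent of `x`. Invariance follows by passing to the limit in
`φ(s + t, θ_{-(s+t)} θ_t ω) = φ(t, ω) ∘ φ(s, θ_{-s} ω)`, using continuity of `φ(t, ω)`.
-/

open Filter Topology Real

theorem tendsto_exp_neg_mul_mul_atTop {l : ℝ} (hl : 0 < l) (c : ℝ) :
    Tendsto (fun t => exp (-l * t) * c) atTop (𝓝 0) := by
  simpa using (tendsto_exp_atBot.comp
    (tendsto_id.const_mul_atTop_of_neg (neg_neg_of_pos hl))).mul_const c

section PullbackCocycle

variable {X Ω : Type*} {θ : ℝ → Ω → Ω} {φ : ℝ → Ω → X → X}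

theorem pullback_add (hθ : ∀ s t : ℝ, θ (s + t) = θ s ∘ θ t)
    (hcocycle : ∀ s t : ℝ, 0 ≤ s → 0 ≤ t → ∀ ω : Ω, φ (s + t) ω = φ t (θ s ω) ∘ φ s ω)
    {s t : ℝ} (hs : 0 ≤ s) (ht : 0 ≤ t) (ω : Ω) :
    φ (s + t) (θ (-(s + t)) ω) = φ t (θ (-t) ω) ∘ φ s (θ (-(s + t)) ω) := by
  have hshift : θ s (θ (-(s + t)) ω) = θ (-t) ω := by
    rw [← Function.comp_apply (f := θ s), ← hθ]
    ring_nf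
  rw [hcocycle s t hs ht, hshift]

theorem pullback_add_shift (hθ0 : θ 0 = id) (hθ : ∀ s t : ℝ, θ (s + t) = θ s ∘ θ t)
    (hcocycle : ∀ s t : ℝ, 0 ≤ s → 0 ≤ t → ∀ ω : Ω, φ (s + t) ω = φ t (θ s ω) ∘ φ s ω)
    {s t : ℝ} (hs : 0 ≤ s) (ht : 0 ≤ t) (ω : Ω) :
    φ (s + t) (θ (-(s + t)) (θ t ω)) = φ t ω ∘ φ s (θ (-s) ω) := by
  have hθ_comp : ∀ a b : ℝ, θ a (θ b ω) = θ (a + b) ω := fun a b => by rw [hθ]; rfl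
  rw [pullback_add hθ hcocycle hs ht, hθ_comp, hθ_comp]
  simp [hθ0]

variable [MetricSpace X] {l : ℝ}
    (hcontr : ∀ t : ℝ, 0 ≤ t → ∀ ω : Ω, ∀ x y : X,
      dist (φ t ω x) (φ t ω y) ≤ exp (-l * t) * dist x y)
include hcontr

theorem dist_pullback_le {M : ℝ} (hM : ∀ x y : X, dist x y ≤ M)
    (hθ : ∀ s t : ℝ, θ (s + t) = θ s ∘ θ t)
    (hcocycle : ∀ s t : ℝ, 0 ≤ s → 0 ≤ t → ∀ ω : Ω, φ (s + t) ω = φ t (θ s ω) ∘ φ s ω)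
    {s t : ℝ} (hs : 0 ≤ s) (hst : s ≤ t) (ω : Ω) (x y : X) :
    dist (φ t (θ (-t) ω) x) (φ s (θ (-s) ω) y) ≤ exp (-l * s) * M := by
  obtain ⟨r, hr, rfl⟩ : ∃ r, 0 ≤ r ∧ t = r + s := ⟨t - s, by linarith, by ring⟩
  rw [pullback_add hθ hcocycle hr hs]
  calc dist (φ s (θ (-s) ω) (φ r (θ (-(r + s)) ω) x)) (φ s (θ (-s) ω) y)
      ≤ exp (-l * s) * dist (φ r (θ (-(r + s)) ω) x) y := hcontr s hs _ _ _
    _ ≤ exp (-l * s) * M := by gcongr; exact hM _ _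

theorem cauchySeq_pullback (hl : 0 < l) {M : ℝ} (hM : ∀ x y : X, dist x y ≤ M)
    (hθ : ∀ s t : ℝ, θ (s + t) = θ s ∘ θ t)
    (hcocycle : ∀ s t : ℝ, 0 ≤ s → 0 ≤ t → ∀ ω : Ω, φ (s + t) ω = φ t (θ s ω) ∘ φ s ω)
    (ω : Ω) (x : X) :
    CauchySeq fun t => φ t (θ (-t) ω) x := by
  refine Metric.cauchySeq_iff'.2 fun ε hε => ?_
  obtain ⟨N, hN, hNε⟩ := ((eventually_ge_atTop 0).and
    ((tendsto_exp_neg_mul_mul_atTop hl M).eventually_lt_const hε)).exists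
  exact ⟨N, fun t hNt => (dist_pullback_le hcontr hM hθ hcocycle hN hNt ω x x).trans_lt hNε⟩

theorem tendsto_pullback_of_tendsto (hl : 0 < l) {ω : Ω} {x₀ : X} {y : X}
    (hy : Tendsto (fun t => φ t (θ (-t) ω) x₀) atTop (𝓝 y)) (x : X) :
    Tendsto (fun t => φ t (θ (-t) ω) x) atTop (𝓝 y) := by
  refine hy.congr_dist (squeeze_zero' (Eventually.of_forall fun _ => dist_nonneg)
    ((eventually_ge_atTop 0).mono fun t ht => hcontr t ht _ x₀ x)
    (tendsto_exp_neg_mul_mul_atTop hl _))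

theorem continuous_cocycle {t : ℝ} (ht : 0 ≤ t) (ω : Ω) : Continuous (φ t ω) :=
  (LipschitzWith.of_dist_le_mul (K := ⟨exp (-l * t), (exp_pos _).le⟩)
    (hcontr t ht ω)).continuous

theorem cocycle_apply_limit_eq (hθ0 : θ 0 = id) (hθ : ∀ s t : ℝ, θ (s + t) = θ s ∘ θ t)
    (hcocycle : ∀ s t : ℝ, 0 ≤ s → 0 ≤ t → ∀ ω : Ω, φ (s + t) ω = φ t (θ s ω) ∘ φ s ω)
    {Y : Ω → X} {x₀ : X} (hY : ∀ ω, Tendsto (fun t => φ t (θ (-t) ω) x₀) atTop (𝓝 (Y ω)))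
    {t : ℝ} (ht : 0 ≤ t) (ω : Ω) :
    φ t ω (Y ω) = Y (θ t ω) := by
  have hlim : Tendsto (fun s => φ t ω (φ s (θ (-s) ω) x₀)) atTop (𝓝 (φ t ω (Y ω))) :=
    ((continuous_cocycle hcontr ht ω).tendsto _).comp (hY ω)
  have hlim' : Tendsto (fun s => φ (s + t) (θ (-(s + t)) (θ t ω)) x₀) atTop (𝓝 (Y (θ t ω))) :=
    (hY (θ t ω)).comp (tendsto_atTop_add_const_right _ t tendsto_id)
  refine tendsto_nhds_unique (hlim.congr' ?_) hlim'
  filter_upwards [eventually_ge_atTop 0] with s hs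
  rw [pullback_add_shift hθ0 hθ hcocycle hs ht]
  rfl

end PullbackCocycle

theorem stmt19_general {X : Type*} [MetricSpace X] [CompleteSpace X] [Nonempty X]
    {Ω : Type*}
    (M : ℝ) (hM : ∀ x y : X, dist x y ≤ M)
    (θ : ℝ → Ω → Ω) (hθ0 : θ 0 = id)
    (hθ : ∀ s t : ℝ, θ (s + t) = θ s ∘ θ t)
    (φ : ℝ → Ω → X → X)
    (hcocycle : ∀ s t : ℝ, 0 ≤ s → 0 ≤ t → ∀ ω : Ω,
      φ (s + t) ω = φ t (θ s ω) ∘ φ s ω)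
    (l : ℝ) (hl : 0 < l)
    (hcontr : ∀ t : ℝ, 0 ≤ t → ∀ ω : Ω, ∀ x y : X,
      dist (φ t ω x) (φ t ω y) ≤ Real.exp (-l * t) * dist x y) :
    ∃ Yhat : Ω → X, ∀ ω : Ω,
      (∀ x : X,
        Filter.Tendsto (fun t : ℝ => dist (φ t (θ (-t) ω) x) (Yhat ω))
          Filter.atTop (nhds 0)) ∧
      (∀ t : ℝ, 0 ≤ t → φ t ω (Yhat ω) = Yhat (θ t ω)) := by
  obtain ⟨x₀⟩ := ‹Nonempty X›
  choose Yhat hY using fun ω =>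
    cauchySeq_tendsto_of_complete (cauchySeq_pullback hcontr hl hM hθ hcocycle ω x₀)
  refine ⟨Yhat, fun ω => ⟨fun x => ?_, fun t ht => ?_⟩⟩
  · exact tendsto_iff_dist_tendsto_zero.1 (tendsto_pullback_of_tendsto hcontr hl (hY ω) x)
  · exact cocycle_apply_limit_eq hcontr hθ0 hθ hcocycle hY ht ω

theorem stmt19 {X : Type*} [MetricSpace X] [CompleteSpace X] [Nonempty X]
    {Ω : Type*}
    (M : ℝ) (hM : ∀ x y : X, dist x y ≤ M)
    (θ : ℝ → Ω → Ω) (hθ0 : θ 0 = id)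
    (hθ : ∀ s t : ℝ, θ (s + t) = θ s ∘ θ t)
    (φ : ℝ → Ω → X → X)
    (hφ0 : ∀ ω : Ω, φ 0 ω = id)
    (hcocycle : ∀ s t : ℝ, 0 ≤ s → 0 ≤ t → ∀ ω : Ω,
      φ (s + t) ω = φ t (θ s ω) ∘ φ s ω)
    (l : ℝ) (hl : 0 < l)
    (hcontr : ∀ t : ℝ, 0 ≤ t → ∀ ω : Ω, ∀ x y : X,
      dist (φ t ω x) (φ t ω y) ≤ Real.exp (-l * t) * dist x y) :
    ∃ Yhat : Ω → X, ∀ ω : Ω,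
      (∀ x : X,
        Filter.Tendsto (fun t : ℝ => dist (φ t (θ (-t) ω) x) (Yhat ω))
          Filter.atTop (nhds 0)) ∧
      (∀ t : ℝ, 0 ≤ t → φ t ω (Yhat ω) = Yhat (θ t ω)) :=
  stmt19_general M hM θ hθ0 hθ φ hcocycle l hl hcontr
end
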